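/- arXiv:1708.06649 — 11 statements merged into one kernel-verified Lean document; each statement's English description precedes it below -/
import Mathlib

section
/- Fix a real number x with 0 ≤ x < (1−q1)·p23. On the interval [0,1], the function p ↦ y1(p, x) is strictly increasing if q1 < p23/(p13+p23), strictly decreasing if q1 > p23/(p13+p23), and constant if q1 = p23/(p13+p23). -/
/-- Fix a real number `x` with `0 ≤ x < (1−q1)·p23`. On the interval `[0,1]`,
the function `p ↦ y1(p, x)` is strictly increasing if `q1 < p23/(p13+p23)`, strictly
decreasing if `q1 > p23/(p13+p23)`, and constant if `q1 = p23/(p13+p23)`. -/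
theorem stmt_0 (q1 q2 p12 p13 p23 : ℝ)
    (hq1 : 0 < q1) (hq1' : q1 < 1) (hq2 : 0 < q2) (hq2' : q2 < 1)
    (hp12 : 0 < p12) (hp12' : p12 ≤ 1) (hp13 : 0 < p13) (hp13' : p13 < 1)
    (hp23 : 0 < p23) (hp23' : p23 ≤ 1) (hp : p13 < p23)
    (y1 : ℝ → ℝ → ℝ)
    (hy1 : ∀ p x, y1 p x =
      q1 * (p13 + (1 - p13) * p12 * p) * ((1 - q1) * p23 - x) /
        (q1 * p12 * (1 - p13) * p + (1 - q1) * p23))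
    (x : ℝ) (hx0 : 0 ≤ x) (hx1 : x < (1 - q1) * p23) :
    (q1 < p23 / (p13 + p23) → StrictMonoOn (fun p => y1 p x) (Set.Icc 0 1)) ∧
    (q1 > p23 / (p13 + p23) → StrictAntiOn (fun p => y1 p x) (Set.Icc 0 1)) ∧
    (q1 = p23 / (p13 + p23) →
      ∀ p ∈ Set.Icc (0:ℝ) 1, ∀ q ∈ Set.Icc (0:ℝ) 1, y1 p x = y1 q x) := by
  have h13 : 0 < 1 - p13 := by linarith
  have hA : 0 < q1 * p12 * (1 - p13) := by positivity
  have hB : 0 < (1 - q1) * p23 := by nlinarith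
  have hC : 0 < (1 - q1) * p23 - x := by linarith
  have hden : ∀ p : ℝ, 0 ≤ p → 0 < q1 * p12 * (1 - p13) * p + (1 - q1) * p23 := by
    intro p hp0
    nlinarith [mul_nonneg hA.le hp0]
  have hsum : 0 < p13 + p23 := by linarith
  refine ⟨?_, ?_, ?_⟩
  · intro hlt p hpI q hqI hpq
    have key : q1 * p13 < (1 - q1) * p23 := by
      rw [lt_div_iff₀ hsum] at hlt; nlinarith
    simp only [hy1]
    rw [div_lt_div_iff₀ (hden p hpI.1) (hden q hqI.1)]
    nlinarith [mul_pos hA (sub_pos.mpr hpq), mul_pos (mul_pos hA (sub_pos.mpr hpq)) hC,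
      mul_pos (mul_pos (mul_pos hA (sub_pos.mpr hpq)) hC) (sub_pos.mpr key)]
  · intro hlt p hpI q hqI hpq
    have key : (1 - q1) * p23 < q1 * p13 := by
      rw [gt_iff_lt, div_lt_iff₀ hsum] at hlt; nlinarith
    simp only [hy1]
    rw [div_lt_div_iff₀ (hden q hqI.1) (hden p hpI.1)]
    nlinarith [mul_pos hA (sub_pos.mpr hpq), mul_pos (mul_pos hA (sub_pos.mpr hpq)) hC,
      mul_pos (mul_pos (mul_pos hA (sub_pos.mpr hpq)) hC) (sub_pos.mpr key)]
  · intro heq p hpI q hqI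
    have key : q1 * p13 = (1 - q1) * p23 := by
      field_simp at heq; nlinarith
    simp only [hy1]
    rw [div_eq_div_iff (hden p hpI.1).ne' (hden q hqI.1).ne']
    linear_combination ((1 - q1) * p23 - x) * (q1 * p12 * (1 - p13)) * (q - p) * key
end

section
/- If q1 < p23/(p13+p23), then for every real x with 0 ≤ x < (1−q1)·p23 and every p ∈ [0,1], y1(p, x) ≤ y1(1, x) = q1·(p13 + (1−p13)·p12)·((1−q1)·p23 − x)/(q1·p12·(1−p13) + (1−q1)·p23); that is, the maximum over p ∈ [0,1] of y1(p, x) is attained at p = 1. -/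
/-- If `q1 < p23/(p13+p23)`, then for every real `x` with `0 ≤ x < (1−q1)·p23`
and every `p ∈ [0,1]`, `y1(p, x) ≤ y1(1, x)`, and
`y1(1, x) = q1·(p13 + (1−p13)·p12)·((1−q1)·p23 − x)/(q1·p12·(1−p13) + (1−q1)·p23)`;
i.e. the maximum over `p ∈ [0,1]` of `y1(p, x)` is attained at `p = 1`. -/
theorem stmt_1 (q1 q2 p12 p13 p23 : ℝ)
    (hq1 : 0 < q1) (hq1' : q1 < 1) (hq2 : 0 < q2) (hq2' : q2 < 1)
    (hp12 : 0 < p12) (hp12' : p12 ≤ 1) (hp13 : 0 < p13) (hp13' : p13 < 1)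
    (hp23 : 0 < p23) (hp23' : p23 ≤ 1) (hp : p13 < p23)
    (y1 : ℝ → ℝ → ℝ)
    (hy1 : ∀ p x, y1 p x =
      q1 * (p13 + (1 - p13) * p12 * p) * ((1 - q1) * p23 - x) /
        (q1 * p12 * (1 - p13) * p + (1 - q1) * p23))
    (hq : q1 < p23 / (p13 + p23)) :
    ∀ x : ℝ, 0 ≤ x → x < (1 - q1) * p23 →
      (∀ p ∈ Set.Icc (0:ℝ) 1, y1 p x ≤ y1 1 x) ∧
      y1 1 x = q1 * (p13 + (1 - p13) * p12) * ((1 - q1) * p23 - x) /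
        (q1 * p12 * (1 - p13) + (1 - q1) * p23) := by
  intro x hx hx'
  have hsum : 0 < p13 + p23 := by linarith
  have hkey : q1 * (p13 + p23) < p23 := (lt_div_iff₀ hsum).mp hq
  constructor
  · rintro p ⟨hp0, hp1⟩
    rw [hy1, hy1]
    have hC : 0 < (1 - q1) * p23 - x := by linarith
    have hd1 : 0 < q1 * p12 * (1 - p13) * p + (1 - q1) * p23 := by
      nlinarith [mul_nonneg (mul_nonneg (mul_nonneg hq1.le hp12.le) (by linarith : (0:ℝ) ≤ 1 - p13)) hp0]
    have hd2 : 0 < q1 * p12 * (1 - p13) * 1 + (1 - q1) * p23 := by nlinarith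
    rw [div_le_div_iff₀ hd1 hd2]
    have ha : (0:ℝ) ≤ (1 - p13) * p12 := by nlinarith
    have hd : 0 ≤ (1 - q1) * p23 - q1 * p13 := by nlinarith
    nlinarith [mul_nonneg (mul_nonneg (mul_nonneg (mul_nonneg hq1.le hC.le) ha)
      (by linarith : (0:ℝ) ≤ 1 - p)) hd]
  · rw [hy1]; ring_nf
end

section
/- If q1 ≥ p23/(p13+p23), then for every real x with 0 ≤ x < (1−q1)·p23 and every p ∈ [0,1], y1(p, x) ≤ y1(0, x) = q1·p13·(1 − x/((1−q1)·p23)); that is, the maximum over p ∈ [0,1] of y1(p, x) is attained at p = 0. -/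
theorem add_mul_div_mul_add_le_div {a b c d p : ℝ} (hc : 0 < c) (hd : 0 ≤ d) (hp : 0 ≤ p)
    (hbd : b * c ≤ a * d) : (a + b * p) / (d * p + c) ≤ a / c := by
  rw [div_le_div_iff₀ (by positivity) hc]
  nlinarith [mul_le_mul_of_nonneg_right hbd hp]

theorem one_sub_mul_le_mul_of_div_add_le {a b q : ℝ} (hab : 0 < a + b) (h : b / (a + b) ≤ q) :
    (1 - q) * b ≤ q * a := by
  rw [div_le_iff₀ hab] at h
  linarith

theorem stmt_2_general (q1 p12 p13 p23 : ℝ)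
    (hq1 : 0 < q1) (hq1' : q1 < 1)
    (hp12 : 0 < p12) (hp13 : 0 < p13) (hp13' : p13 < 1)
    (hp23 : 0 < p23)
    (y1 : ℝ → ℝ → ℝ)
    (hy1 : ∀ p x, y1 p x =
      q1 * (p13 + (1 - p13) * p12 * p) * ((1 - q1) * p23 - x) /
        (q1 * p12 * (1 - p13) * p + (1 - q1) * p23))
    (hq : q1 ≥ p23 / (p13 + p23)) :
    ∀ x : ℝ, 0 ≤ x → x < (1 - q1) * p23 →
      (∀ p ∈ Set.Icc (0:ℝ) 1, y1 p x ≤ y1 0 x) ∧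
      y1 0 x = q1 * p13 * (1 - x / ((1 - q1) * p23)) := by
  intro x _ hx
  have hB : 0 < (1 - q1) * p23 := mul_pos (by linarith) hp23
  -- `y1 · x` is a nonnegative multiple of a Möbius function of `p`, nonincreasing because
  -- its determinant has the sign of `(1 - q1) * p23 - q1 * p13`, which is `≤ 0` by `hq`
  have hy1' : ∀ p, y1 p x = q1 * ((1 - q1) * p23 - x) *
      ((p13 + (1 - p13) * p12 * p) / (q1 * p12 * (1 - p13) * p + (1 - q1) * p23)) := by
    intro p; rw [hy1]; ring
  have hdet : (1 - p13) * p12 * ((1 - q1) * p23) ≤ p13 * (q1 * p12 * (1 - p13)) := by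
    have := one_sub_mul_le_mul_of_div_add_le (by positivity) hq
    have : 0 ≤ (1 - p13) * p12 := mul_nonneg (by linarith) hp12.le
    nlinarith
  refine ⟨fun p ⟨hp0, _⟩ => ?_, ?_⟩
  · rw [hy1', hy1', mul_zero, add_zero, mul_zero, zero_add]
    have hd : 0 ≤ q1 * p12 * (1 - p13) := mul_nonneg (by positivity) (by linarith)
    exact mul_le_mul_of_nonneg_left (add_mul_div_mul_add_le_div hB hd hp0 hdet)
      (mul_nonneg hq1.le (by linarith))
  · rw [hy1, one_sub_div hB.ne']
    ring

/-- If `q1 ≥ p23/(p13+p23)`, then for every real `x` with `0 ≤ x < (1−q1)·p23`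
and every `p ∈ [0,1]`, `y1(p, x) ≤ y1(0, x)`, and `y1(0, x) = q1·p13·(1 − x/((1−q1)·p23))`;
i.e. the maximum over `p ∈ [0,1]` of `y1(p, x)` is attained at `p = 0`. -/
theorem stmt_2 (q1 q2 p12 p13 p23 : ℝ)
    (hq1 : 0 < q1) (hq1' : q1 < 1) (hq2 : 0 < q2) (hq2' : q2 < 1)
    (hp12 : 0 < p12) (hp12' : p12 ≤ 1) (hp13 : 0 < p13) (hp13' : p13 < 1)
    (hp23 : 0 < p23) (hp23' : p23 ≤ 1) (hp : p13 < p23)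
    (y1 : ℝ → ℝ → ℝ)
    (hy1 : ∀ p x, y1 p x =
      q1 * (p13 + (1 - p13) * p12 * p) * ((1 - q1) * p23 - x) /
        (q1 * p12 * (1 - p13) * p + (1 - q1) * p23))
    (hq : q1 ≥ p23 / (p13 + p23)) :
    ∀ x : ℝ, 0 ≤ x → x < (1 - q1) * p23 →
      (∀ p ∈ Set.Icc (0:ℝ) 1, y1 p x ≤ y1 0 x) ∧
      y1 0 x = q1 * p13 * (1 - x / ((1 - q1) * p23)) :=
  stmt_2_general q1 p12 p13 p23 hq1 hq1' hp12 hp13 hp13' hp23 y1 hy1 hq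
end

section
/- Fix a real number x > 0. On the interval [0,1], the function p ↦ y2(p, x) is strictly increasing if q2 > p13/(p13+p23), strictly decreasing if q2 < p13/(p13+p23), and constant if q2 = p13/(p13+p23). -/
/-!
The numerator and the denominator of the fraction in `y2 p x` are affine in `p` with the same
slope `a = (1 - q2) p12 (1 - p13) > 0`, so
`y2 p x = q2 p23 - x + x ((1 - q2) p13 - q2 p23) / (a p + (1 - q2) p13)`.
The monotonicity of `p ↦ k / (a p + c)` with `a, c > 0` is decided by the sign of `k`, and
`(1 - q2) p13 < q2 p23` is exactly `q2 > p13 / (p13 + p23)`.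
-/

open Set

section LinearFractional

variable {K : Type*} [Field K] [LinearOrder K] [IsStrictOrderedRing K] {k a c : K}

theorem strictAntiOn_div_mul_add (hk : 0 < k) (ha : 0 < a) (hc : 0 < c) :
    StrictAntiOn (fun t => k / (a * t + c)) (Ici 0) := by
  intro s hs t ht hst
  have hs' : 0 < a * s + c := by have : (0:K) ≤ s := hs; positivity
  exact div_lt_div_of_pos_left hk hs' (by gcongr)

theorem strictMonoOn_div_mul_add (hk : k < 0) (ha : 0 < a) (hc : 0 < c) :
    StrictMonoOn (fun t => k / (a * t + c)) (Ici 0) := by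
  simpa [neg_div] using (strictAntiOn_div_mul_add (neg_pos.2 hk) ha hc).neg

end LinearFractional

theorem stmt_3_general (q2 p12 p13 p23 : ℝ)
    (hq2' : q2 < 1)
    (hp12 : 0 < p12) (hp13 : 0 < p13) (hp13' : p13 < 1)
    (hp23 : 0 < p23)
    (y2 : ℝ → ℝ → ℝ)
    (hy2 : ∀ p x, y2 p x =
      q2 * p23 - ((1 - q2) * p12 * (1 - p13) * p + q2 * p23) * x /
        ((1 - q2) * (p13 + (1 - p13) * p12 * p)))
    (x : ℝ) (hx : 0 < x) :
    (q2 > p13 / (p13 + p23) → StrictMonoOn (fun p => y2 p x) (Set.Icc 0 1)) ∧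
    (q2 < p13 / (p13 + p23) → StrictAntiOn (fun p => y2 p x) (Set.Icc 0 1)) ∧
    (q2 = p13 / (p13 + p23) →
      ∀ p ∈ Set.Icc (0:ℝ) 1, ∀ q ∈ Set.Icc (0:ℝ) 1, y2 p x = y2 q x) := by
  set a := (1 - q2) * p12 * (1 - p13)
  set c := (1 - q2) * p13
  set k := x * (c - q2 * p23)
  have ha : 0 < a := mul_pos (mul_pos (by linarith) hp12) (by linarith)
  have hc : 0 < c := mul_pos (by linarith) hp13
  have hy2_eq : EqOn (fun p => q2 * p23 - x + k / (a * p + c)) (fun p => y2 p x) (Ici 0) := by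
    intro p hp
    have hden : a * p + c ≠ 0 := by have : (0:ℝ) ≤ p := hp; positivity
    simp only [hy2, k]
    rw [show (1 - q2) * (p13 + (1 - p13) * p12 * p) = a * p + c by ring]
    field_simp
    ring
  have hsum : 0 < p13 + p23 := by linarith
  refine ⟨fun hgt => ?_, fun hlt => ?_, fun heq => ?_⟩
  · have hk : k < 0 :=
      mul_neg_of_pos_of_neg hx (by rw [gt_iff_lt, div_lt_iff₀ hsum] at hgt; linarith)
    exact (((strictMonoOn_div_mul_add hk ha hc).const_add _).congr hy2_eq).mono Icc_subset_Ici_self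
  · have hk : 0 < k := mul_pos hx (by rw [lt_div_iff₀ hsum] at hlt; linarith)
    exact (((strictAntiOn_div_mul_add hk ha hc).const_add _).congr hy2_eq).mono Icc_subset_Ici_self
  · have hk : k = 0 := by
      rw [eq_div_iff hsum.ne'] at heq
      linear_combination -x * heq
    intro p hp q hq
    simp only [← hy2_eq hp.1, ← hy2_eq hq.1, hk, zero_div]

/-- Fix a real number `x > 0`. On the interval `[0,1]`, the function
`p ↦ y2(p, x)` is strictly increasing if `q2 > p13/(p13+p23)`, strictly decreasing if
`q2 < p13/(p13+p23)`, and constant if `q2 = p13/(p13+p23)`. -/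
theorem stmt_3 (q1 q2 p12 p13 p23 : ℝ)
    (hq1 : 0 < q1) (hq1' : q1 < 1) (hq2 : 0 < q2) (hq2' : q2 < 1)
    (hp12 : 0 < p12) (hp12' : p12 ≤ 1) (hp13 : 0 < p13) (hp13' : p13 < 1)
    (hp23 : 0 < p23) (hp23' : p23 ≤ 1) (hp : p13 < p23)
    (y2 : ℝ → ℝ → ℝ)
    (hy2 : ∀ p x, y2 p x =
      q2 * p23 - ((1 - q2) * p12 * (1 - p13) * p + q2 * p23) * x /
        ((1 - q2) * (p13 + (1 - p13) * p12 * p)))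
    (x : ℝ) (hx : 0 < x) :
    (q2 > p13 / (p13 + p23) → StrictMonoOn (fun p => y2 p x) (Set.Icc 0 1)) ∧
    (q2 < p13 / (p13 + p23) → StrictAntiOn (fun p => y2 p x) (Set.Icc 0 1)) ∧
    (q2 = p13 / (p13 + p23) →
      ∀ p ∈ Set.Icc (0:ℝ) 1, ∀ q ∈ Set.Icc (0:ℝ) 1, y2 p x = y2 q x) :=
  stmt_3_general q2 p12 p13 p23 hq2' hp12 hp13 hp13' hp23 y2 hy2 x hx
end

section
/- If q2 ≥ p13/(p13+p23), then for every p ∈ [0,1] one has R2(p) ⊆ R2(1); consequently ⋃_{p ∈ [0,1]} R2(p) = R2(1). -/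
/-- If `q2 ≥ p13/(p13+p23)`, then for every `p ∈ [0,1]` one has
`R2(p) ⊆ R2(1)`; consequently `⋃_{p ∈ [0,1]} R2(p) = R2(1)`. -/
theorem stmt_4 (q1 q2 p12 p13 p23 : ℝ)
    (hq1 : 0 < q1) (hq1' : q1 < 1) (hq2 : 0 < q2) (hq2' : q2 < 1)
    (hp12 : 0 < p12) (hp12' : p12 ≤ 1) (hp13 : 0 < p13) (hp13' : p13 < 1)
    (hp23 : 0 < p23) (hp23' : p23 ≤ 1) (hp : p13 < p23)
    (R2 : ℝ → Set (ℝ × ℝ))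
    (hR2 : ∀ p, R2 p = {lam : ℝ × ℝ | 0 ≤ lam.1 ∧ 0 ≤ lam.2 ∧
      lam.2 + ((1 - q2) * (1 - p13) * p12 * p + q2 * p23) * lam.1 /
        ((1 - q2) * (p13 + (1 - p13) * p12 * p)) < q2 * p23 ∧
      lam.1 < q1 * (1 - q2) * (p13 + (1 - p13) * p12 * p)})
    (hq : q2 ≥ p13 / (p13 + p23)) :
    (∀ p ∈ Set.Icc (0:ℝ) 1, R2 p ⊆ R2 1) ∧
    (⋃ p ∈ Set.Icc (0:ℝ) 1, R2 p) = R2 1 := by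
  have hq2pos : 0 < 1 - q2 := by linarith
  have key : (1 - q2) * p13 ≤ q2 * p23 := by
    have h : p13 ≤ q2 * (p13 + p23) := by
      rw [ge_iff_le, div_le_iff₀ (by linarith)] at hq; linarith
    nlinarith
  have hsub : ∀ p ∈ Set.Icc (0:ℝ) 1, R2 p ⊆ R2 1 := by
    intro p hpmem lam hlam
    obtain ⟨hp0, hp1⟩ := hpmem
    rw [hR2] at hlam ⊢
    obtain ⟨h1, h2, h3, h4⟩ := hlam
    have hDp : 0 < (1 - q2) * (p13 + (1 - p13) * p12 * p) := by
      apply mul_pos hq2pos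
      nlinarith [mul_nonneg (mul_nonneg (by linarith : (0:ℝ) ≤ 1 - p13) hp12.le) hp0]
    have hD1 : 0 < (1 - q2) * (p13 + (1 - p13) * p12 * 1) := by
      apply mul_pos hq2pos; nlinarith
    refine ⟨h1, h2, ?_, ?_⟩
    · have hfac : 0 ≤ lam.1 * ((1 - q2) * ((1 - p13) * p12) * (1 - p)) *
        (q2 * p23 - (1 - q2) * p13) := by
        apply mul_nonneg
        · apply mul_nonneg h1
          apply mul_nonneg (mul_nonneg hq2pos.le (by nlinarith)) (by linarith)
        · linarith
      have hmono : ((1 - q2) * (1 - p13) * p12 * 1 + q2 * p23) * lam.1 /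
          ((1 - q2) * (p13 + (1 - p13) * p12 * 1)) ≤
          ((1 - q2) * (1 - p13) * p12 * p + q2 * p23) * lam.1 /
          ((1 - q2) * (p13 + (1 - p13) * p12 * p)) := by
        rw [div_le_div_iff₀ hD1 hDp]
        nlinarith [hfac]
      linarith
    · have hle : q1 * (1 - q2) * (p13 + (1 - p13) * p12 * p) ≤
          q1 * (1 - q2) * (p13 + (1 - p13) * p12 * 1) := by
        nlinarith [mul_nonneg (mul_nonneg (mul_nonneg hq1.le hq2pos.le)
          (mul_nonneg (by linarith : (0:ℝ) ≤ 1 - p13) hp12.le)) (by linarith : (0:ℝ) ≤ 1 - p)]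
      linarith
  refine ⟨hsub, Set.Subset.antisymm (Set.iUnion₂_subset hsub) ?_⟩
  exact Set.subset_iUnion₂ (s := fun p _ => R2 p) 1 ⟨by norm_num, le_refl 1⟩
end

section
/- If q2 < p13/(p13+p23) and x is a real number with 0 ≤ x < q1·(1−q2)·p13, then for every p ∈ [0,1], y2(p, x) ≤ y2(0, x) = q2·p23·(1 − x/((1−q2)·p13)); that is, the maximum over p ∈ [0,1] of y2(p, x) is attained at p = 0. -/
/-! The fraction `((1-q2) p12 (1-p13) p + q2 p23) / ((1-q2) (p13 + (1-p13) p12 p))` subtracted in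
`y2 p x` is a Möbius function of `p` whose determinant has the sign of `(1-q2) p13 - q2 p23`, and
`q2 < p13 / (p13 + p23)` says precisely that this is positive. So the fraction increases with `p`,
and `y2 p x`, which subtracts `x ≥ 0` times it, is largest at `p = 0`. -/

theorem div_le_mul_add_div_mul_add {u v w b t : ℝ} (hw : 0 < w) (hv : 0 ≤ v) (ht : 0 ≤ t)
    (hdet : b * v ≤ u * w) : b / w ≤ (u * t + b) / (v * t + w) := by
  rw [div_le_div_iff₀ hw (by positivity)]
  nlinarith [mul_le_mul_of_nonneg_right hdet ht]

theorem stmt_5_general (q2 p12 p13 p23 : ℝ)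
    (hq2' : q2 < 1)
    (hp12 : 0 < p12) (hp13 : 0 < p13) (hp13' : p13 < 1)
    (hp23 : 0 < p23)
    (y2 : ℝ → ℝ → ℝ)
    (hy2 : ∀ p x, y2 p x =
      q2 * p23 - ((1 - q2) * p12 * (1 - p13) * p + q2 * p23) * x /
        ((1 - q2) * (p13 + (1 - p13) * p12 * p)))
    (hq : q2 < p13 / (p13 + p23))
    (x : ℝ) (hx0 : 0 ≤ x) :
    (∀ p ∈ Set.Icc (0:ℝ) 1, y2 p x ≤ y2 0 x) ∧
    y2 0 x = q2 * p23 * (1 - x / ((1 - q2) * p13)) := by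
  have hy2_zero : y2 0 x = q2 * p23 - q2 * p23 / ((1 - q2) * p13) * x := by
    rw [hy2, mul_div_right_comm]
    simp only [mul_zero, zero_add, add_zero]
  refine ⟨fun p ⟨hp0, _⟩ => ?_, by rw [hy2_zero]; ring⟩
  have hq2c : 0 < 1 - q2 := sub_pos.2 hq2'
  have hp13c : 0 < 1 - p13 := sub_pos.2 hp13'
  have hdet : q2 * p23 ≤ (1 - q2) * p13 := by
    rw [lt_div_iff₀ (by positivity)] at hq
    linarith
  have hv : 0 ≤ (1 - q2) * (1 - p13) * p12 := by positivity
  have hmono := div_le_mul_add_div_mul_add (u := (1 - q2) * p12 * (1 - p13))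
    (w := (1 - q2) * p13) (b := q2 * p23) (by positivity) hv hp0
    (by linarith [mul_le_mul_of_nonneg_left hdet hv])
  rw [hy2_zero, hy2, mul_div_right_comm]
  gcongr q2 * p23 - ?_ * x
  refine hmono.trans_eq ?_
  ring

/-- If `q2 < p13/(p13+p23)` and `0 ≤ x < q1·(1−q2)·p13`, then for every
`p ∈ [0,1]`, `y2(p, x) ≤ y2(0, x)`, and `y2(0, x) = q2·p23·(1 − x/((1−q2)·p13))`;
i.e. the maximum over `p ∈ [0,1]` of `y2(p, x)` is attained at `p = 0`. -/
theorem stmt_5 (q1 q2 p12 p13 p23 : ℝ)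
    (hq1 : 0 < q1) (hq1' : q1 < 1) (hq2 : 0 < q2) (hq2' : q2 < 1)
    (hp12 : 0 < p12) (hp12' : p12 ≤ 1) (hp13 : 0 < p13) (hp13' : p13 < 1)
    (hp23 : 0 < p23) (hp23' : p23 ≤ 1) (hp : p13 < p23)
    (y2 : ℝ → ℝ → ℝ)
    (hy2 : ∀ p x, y2 p x =
      q2 * p23 - ((1 - q2) * p12 * (1 - p13) * p + q2 * p23) * x /
        ((1 - q2) * (p13 + (1 - p13) * p12 * p)))
    (hq : q2 < p13 / (p13 + p23))
    (x : ℝ) (hx0 : 0 ≤ x) (hx1 : x < q1 * (1 - q2) * p13) :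
    (∀ p ∈ Set.Icc (0:ℝ) 1, y2 p x ≤ y2 0 x) ∧
    y2 0 x = q2 * p23 * (1 - x / ((1 - q2) * p13)) :=
  stmt_5_general q2 p12 p13 p23 hq2' hp12 hp13 hp13' hp23 y2 hy2 hq x hx0
end

section
/- Assume q2 < p13/(p13+p23) and let x be a real number with q1·(1−q2)·p13 ≤ x < q1·(1−q2)·(p13 + (1−p13)·p12). Set p* := (x − q1·(1−q2)·p13)/(q1·(1−q2)·(1−p13)·p12). Then the feasible set F := { p ∈ [0,1] : x < q1·(1−q2)·(p13 + (1−p13)·p12·p) } equals the half-open interval (p*, 1], and the supremum over p ∈ F of y2(p, x) equals q2·p23·(1−q1) + q1·(1−q2)·p13 − x (this value equals y2(p*, x) and is not attained on F). -/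
/-!
Write `K := q2·p23 − (1−q2)·p13`, which is negative exactly when `q2 < p13/(p13+p23)`, and
`d(p) := (1−q2)·(p13 + (1−p13)·p12·p)`. Then
`y2(p, x) = M + K·(q1·d(p) − x)/d(p)` with `M := q2·p23·(1−q1) + q1·(1−q2)·p13 − x`,
so `y2(p, x) < M` precisely on the feasible set `q1·d(p) > x`, with equality at its boundary
point `p*`, where `q1·d(p*) = x`. Since `y2(·, x)` is continuous at `p*` and `p*` lies in the
closure of `F = (p*, 1]`, the supremum is `M`.
-/

open Set

theorem csSup_image_eq_of_mem_closure {α β : Type*} [TopologicalSpace α]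
    [ConditionallyCompleteLinearOrder β] [TopologicalSpace β] [OrderTopology β]
    {f : α → β} {s : Set α} {a : α} (ha : a ∈ closure s) (hf : ContinuousWithinAt f s a)
    (hle : ∀ p ∈ s, f p ≤ f a) : sSup (f '' s) = f a :=
  (isLUB_of_mem_closure (forall_mem_image.2 hle) (hf.mem_closure_image ha)).csSup_eq
    ((closure_nonempty_iff.1 ⟨a, ha⟩).image f)

theorem sep_Icc_lt_affine_eq_Ioc {A a C x : ℝ} (hA : 0 < A) (hC : 0 < C) (hx : A * a ≤ x) :
    {p ∈ Icc (0 : ℝ) 1 | x < A * (a + C * p)} = Ioc ((x - A * a) / (A * C)) 1 := by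
  have hAC : 0 < A * C := mul_pos hA hC
  have hlt : ∀ p, x < A * (a + C * p) ↔ (x - A * a) / (A * C) < p := fun p => by
    rw [div_lt_iff₀ hAC]
    constructor <;> intro h <;> linarith
  have hnonneg : 0 ≤ (x - A * a) / (A * C) := div_nonneg (by linarith) hAC.le
  ext p
  simp only [mem_Icc, mem_Ioc, hlt]
  exact ⟨fun ⟨⟨_, h1⟩, h⟩ => ⟨h, h1⟩, fun ⟨h, h1⟩ => ⟨⟨hnonneg.trans h.le, h1⟩, h⟩⟩

theorem mul_add_mul_div_eq {A a C x : ℝ} (hA : A ≠ 0) (hC : C ≠ 0) :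
    A * (a + C * ((x - A * a) / (A * C))) = x := by
  field_simp
  ring

theorem sub_mul_sub_neg_of_lt_div_add {q a b : ℝ} (hab : 0 < a + b) (hq : q < a / (a + b)) :
    q * b - (1 - q) * a < 0 := by
  rw [lt_div_iff₀ hab] at hq
  linarith

theorem y2_formula_eq {q1 q2 p12 p13 p23 p x : ℝ}
    (hd : (1 - q2) * (p13 + (1 - p13) * p12 * p) ≠ 0) :
    q2 * p23 - ((1 - q2) * p12 * (1 - p13) * p + q2 * p23) * x /
        ((1 - q2) * (p13 + (1 - p13) * p12 * p)) =
      q2 * p23 * (1 - q1) + q1 * (1 - q2) * p13 - x +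
        (q2 * p23 - (1 - q2) * p13) * (q1 * (1 - q2) * (p13 + (1 - p13) * p12 * p) - x) /
          ((1 - q2) * (p13 + (1 - p13) * p12 * p)) := by
  have hnum : (1 - q2) * p12 * (1 - p13) * p + q2 * p23 =
      (1 - q2) * (p13 + (1 - p13) * p12 * p) + (q2 * p23 - (1 - q2) * p13) := by ring
  rw [hnum]
  generalize p13 + (1 - p13) * p12 * p = D at *
  have hq2 := left_ne_zero_of_mul hd
  have hD := right_ne_zero_of_mul hd
  field_simp
  ring

theorem stmt_6_general (q1 q2 p12 p13 p23 : ℝ)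
    (hq1 : 0 < q1) (hq2' : q2 < 1)
    (hp12 : 0 < p12) (hp13 : 0 < p13) (hp13' : p13 < 1)
    (hp23 : 0 < p23)
    (y2 : ℝ → ℝ → ℝ)
    (hy2 : ∀ p x, y2 p x =
      q2 * p23 - ((1 - q2) * p12 * (1 - p13) * p + q2 * p23) * x /
        ((1 - q2) * (p13 + (1 - p13) * p12 * p)))
    (hq : q2 < p13 / (p13 + p23))
    (x : ℝ) (hx0 : q1 * (1 - q2) * p13 ≤ x)
    (hx1 : x < q1 * (1 - q2) * (p13 + (1 - p13) * p12))
    (pstar : ℝ)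
    (hpstar : pstar = (x - q1 * (1 - q2) * p13) / (q1 * (1 - q2) * (1 - p13) * p12))
    (F : Set ℝ)
    (hF : F = {p ∈ Set.Icc (0:ℝ) 1 | x < q1 * (1 - q2) * (p13 + (1 - p13) * p12 * p)}) :
    F = Set.Ioc pstar 1 ∧
    sSup ((fun p => y2 p x) '' F) = q2 * p23 * (1 - q1) + q1 * (1 - q2) * p13 - x ∧
    y2 pstar x = q2 * p23 * (1 - q1) + q1 * (1 - q2) * p13 - x ∧
    (∀ p ∈ F, y2 p x < q2 * p23 * (1 - q1) + q1 * (1 - q2) * p13 - x) := by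
  have hq2 : 0 < 1 - q2 := by linarith
  have hA : 0 < q1 * (1 - q2) := mul_pos hq1 hq2
  have hC : 0 < (1 - p13) * p12 := mul_pos (by linarith) hp12
  have hK := sub_mul_sub_neg_of_lt_div_add (by linarith) hq
  replace hpstar : pstar = (x - q1 * (1 - q2) * p13) / (q1 * (1 - q2) * ((1 - p13) * p12)) := by
    rw [hpstar, mul_assoc _ (1 - p13)]
  have hFeq : F = Ioc pstar 1 := by
    rw [hF, hpstar]
    exact sep_Icc_lt_affine_eq_Ioc hA hC hx0
  have hpstar1 : pstar < 1 := by
    rw [hpstar, div_lt_one (mul_pos hA hC)]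
    linarith
  have hboundary : q1 * (1 - q2) * (p13 + (1 - p13) * p12 * pstar) = x := by
    rw [hpstar]
    exact mul_add_mul_div_eq hA.ne' hC.ne'
  have hdstar : (1 - q2) * (p13 + (1 - p13) * p12 * pstar) ≠ 0 := by
    intro h
    nlinarith [mul_pos hA hp13]
  have hval : y2 pstar x = q2 * p23 * (1 - q1) + q1 * (1 - q2) * p13 - x := by
    rw [hy2, y2_formula_eq (q1 := q1) hdstar, hboundary]
    simp
  have hbound : ∀ p ∈ F, y2 p x < q2 * p23 * (1 - q1) + q1 * (1 - q2) * p13 - x := by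
    rintro p hpF
    rw [hF] at hpF
    obtain ⟨⟨hp0, -⟩, hfeas⟩ := hpF
    have hd : 0 < (1 - q2) * (p13 + (1 - p13) * p12 * p) := by positivity
    rw [hy2, y2_formula_eq (q1 := q1) hd.ne']
    have := div_neg_of_neg_of_pos (mul_neg_of_neg_of_pos hK (sub_pos.2 hfeas)) hd
    linarith
  have hcont : ContinuousAt (fun p => y2 p x) pstar := by
    simp only [hy2]
    fun_prop (disch := exact hdstar)
  refine ⟨hFeq, ?_, hval, hbound⟩
  rw [← hval]
  refine csSup_image_eq_of_mem_closure ?_ hcont.continuousWithinAt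
    fun p hp => hval ▸ (hbound p hp).le
  rw [hFeq, closure_Ioc hpstar1.ne]
  exact left_mem_Icc.2 hpstar1.le

/-- Assume `q2 < p13/(p13+p23)` and let `x` satisfy
`q1·(1−q2)·p13 ≤ x < q1·(1−q2)·(p13 + (1−p13)·p12)`. Set
`p* := (x − q1·(1−q2)·p13)/(q1·(1−q2)·(1−p13)·p12)`. Then the feasible set
`F := { p ∈ [0,1] : x < q1·(1−q2)·(p13 + (1−p13)·p12·p) }` equals `(p*, 1]`, and
the supremum over `p ∈ F` of `y2(p, x)` equals
`q2·p23·(1−q1) + q1·(1−q2)·p13 − x`; this value equals `y2(p*, x)` and is not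
attained on `F`. -/
theorem stmt_6 (q1 q2 p12 p13 p23 : ℝ)
    (hq1 : 0 < q1) (hq1' : q1 < 1) (hq2 : 0 < q2) (hq2' : q2 < 1)
    (hp12 : 0 < p12) (hp12' : p12 ≤ 1) (hp13 : 0 < p13) (hp13' : p13 < 1)
    (hp23 : 0 < p23) (hp23' : p23 ≤ 1) (hp : p13 < p23)
    (y2 : ℝ → ℝ → ℝ)
    (hy2 : ∀ p x, y2 p x =
      q2 * p23 - ((1 - q2) * p12 * (1 - p13) * p + q2 * p23) * x /
        ((1 - q2) * (p13 + (1 - p13) * p12 * p)))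
    (hq : q2 < p13 / (p13 + p23))
    (x : ℝ) (hx0 : q1 * (1 - q2) * p13 ≤ x)
    (hx1 : x < q1 * (1 - q2) * (p13 + (1 - p13) * p12))
    (pstar : ℝ)
    (hpstar : pstar = (x - q1 * (1 - q2) * p13) / (q1 * (1 - q2) * (1 - p13) * p12))
    (F : Set ℝ)
    (hF : F = {p ∈ Set.Icc (0:ℝ) 1 | x < q1 * (1 - q2) * (p13 + (1 - p13) * p12 * p)}) :
    F = Set.Ioc pstar 1 ∧
    sSup ((fun p => y2 p x) '' F) = q2 * p23 * (1 - q1) + q1 * (1 - q2) * p13 - x ∧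
    y2 pstar x = q2 * p23 * (1 - q1) + q1 * (1 - q2) * p13 - x ∧
    (∀ p ∈ F, y2 p x < q2 * p23 * (1 - q1) + q1 * (1 - q2) * p13 - x) :=
  stmt_6_general q1 q2 p12 p13 p23 hq1 hq2' hp12 hp13 hp13' hp23 y2 hy2 hq x hx0 hx1 pstar hpstar F
    hF
end

section
/- For every p ∈ [0,1], if one sets x_p := q1·(1−q2)·(p13 + (1−p13)·p12·p), then x_p + y2(p, x_p) = q2·p23·(1−q1) + q1·(1−q2)·p13. In particular, along the source-queue stability boundary the sum λ1 + λ2 is independent of the cooperation probability p. -/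
/-- For every `p ∈ [0,1]`, with `x_p := q1·(1−q2)·(p13 + (1−p13)·p12·p)`,
one has `x_p + y2(p, x_p) = q2·p23·(1−q1) + q1·(1−q2)·p13`: along the source-queue
stability boundary the sum `λ1 + λ2` is independent of the cooperation probability `p`. -/
theorem stmt_7 (q1 q2 p12 p13 p23 : ℝ)
    (hq1 : 0 < q1) (hq1' : q1 < 1) (hq2 : 0 < q2) (hq2' : q2 < 1)
    (hp12 : 0 < p12) (hp12' : p12 ≤ 1) (hp13 : 0 < p13) (hp13' : p13 < 1)
    (hp23 : 0 < p23) (hp23' : p23 ≤ 1) (hp : p13 < p23)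
    (y2 : ℝ → ℝ → ℝ)
    (hy2 : ∀ p x, y2 p x =
      q2 * p23 - ((1 - q2) * p12 * (1 - p13) * p + q2 * p23) * x /
        ((1 - q2) * (p13 + (1 - p13) * p12 * p))) :
    ∀ p ∈ Set.Icc (0:ℝ) 1, ∀ xp : ℝ,
      xp = q1 * (1 - q2) * (p13 + (1 - p13) * p12 * p) →
      xp + y2 p xp = q2 * p23 * (1 - q1) + q1 * (1 - q2) * p13 := by
  intro p hpmem xp hxp
  obtain ⟨hp0, hp1⟩ := hpmem
  have h1 : (0:ℝ) ≤ (1 - p13) * p12 * p :=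
    mul_nonneg (mul_nonneg (by linarith) hp12.le) hp0
  have hd : (0:ℝ) < p13 + (1 - p13) * p12 * p := by linarith
  have hq2d : (0:ℝ) < 1 - q2 := by linarith
  rw [hy2, hxp]
  field_simp
  ring
end

section
/- If q2 < p13/(p13+p23), then ⋃_{p ∈ [0,1]} R2(p) = R2' ∪ R2'', where R2' := { (λ1, λ2) ∈ ℝ² : λ1 ≥ 0, λ2 ≥ 0, λ1/((1−q2)·p13) + λ2/(q2·p23) < 1, and λ1 < q1·(1−q2)·p13 } and R2'' := { (λ1, λ2) ∈ ℝ² : λ2 ≥ 0, λ1 + λ2 < q1·(1−q2)·p13 + q2·p23·(1−q1), and q1·(1−q2)·p13 ≤ λ1 < q1·(1−q2)·(p13 + (1−p13)·p12) }. -/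
/-!
Write `a = (1 - q2) p13`, `b = q2 p23`, `c = (1 - q2)(1 - p13) p12` and `s = a + c p ∈ [a, a + c]`.
In terms of the load `x / s` of user 1, `R2(p)` is cut out by `x + y < b + (a - b) (x / s)` and
`x / s < q1`. The hypothesis on `q2` says `b < a`, so the first bound decreases in `s`: for
`x < q1 a` the best choice is `s = a`, which gives `R2'`; for `x ≥ q1 a` the best choices are
`s ↓ x / q1`, where the first bound tends to `b + (a - b) q1`, and this strict limit gives `R2''`.
-/

open Set Filter Topology

/-- `R2(p)` is `stabilityRegion ((1 - q2) * p13) (q2 * p23) q1 s` for the service rate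
`s = (1 - q2) * (p13 + (1 - p13) * p12 * p)` of user 1. -/
def stabilityRegion (a b q s : ℝ) : Set (ℝ × ℝ) :=
  {lam | 0 ≤ lam.1 ∧ 0 ≤ lam.2 ∧ lam.2 + (s - a + b) * lam.1 / s < b ∧ lam.1 < q * s}

section

variable {a b q c s x y : ℝ}

lemma div_add_div_lt_one_iff_add_lt (ha : 0 < a) (hb : 0 < b) :
    x / a + y / b < 1 ↔ x + y < b + (a - b) * (x / a) := by
  have hsplit : (a - b) * (x / a) = x - b * (x / a) := by field_simp
  rw [hsplit, ← lt_sub_iff_add_lt', div_lt_iff₀ hb]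
  constructor <;> intro <;> linarith

lemma mem_stabilityRegion_iff (hs : 0 < s) {lam : ℝ × ℝ} :
    lam ∈ stabilityRegion a b q s ↔ 0 ≤ lam.1 ∧ 0 ≤ lam.2 ∧
      lam.1 + lam.2 < b + (a - b) * (lam.1 / s) ∧ lam.1 / s < q := by
  have hload : (s - a + b) * lam.1 / s = lam.1 - (a - b) * (lam.1 / s) := by
    field_simp; ring
  rw [stabilityRegion, mem_ofPred_eq, hload, div_lt_iff₀ hs]
  constructor <;> rintro ⟨hx, hy, hsum, hrate⟩ <;> exact ⟨hx, hy, by linarith, hrate⟩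

lemma stabilityRegion_subset (ha : 0 < a) (hb : 0 < b) (hba : b ≤ a) (hs : s ∈ Icc a (a + c)) :
    stabilityRegion a b q s ⊆
      {lam | 0 ≤ lam.1 ∧ 0 ≤ lam.2 ∧ lam.1 / a + lam.2 / b < 1 ∧ lam.1 < q * a} ∪
      {lam | 0 ≤ lam.2 ∧ lam.1 + lam.2 < q * a + b * (1 - q) ∧ q * a ≤ lam.1 ∧
        lam.1 < q * (a + c)} := by
  intro lam hlam
  have hs0 : 0 < s := ha.trans_le hs.1
  obtain ⟨hx, hy, hsum, hrate⟩ := (mem_stabilityRegion_iff hs0).1 hlam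
  rcases lt_or_ge lam.1 (q * a) with hlt | hge
  · refine Or.inl ⟨hx, hy, (div_add_div_lt_one_iff_add_lt ha hb).2 ?_, hlt⟩
    have hrate_le : lam.1 / s ≤ lam.1 / a := div_le_div_of_nonneg_left hx ha hs.1
    linarith [mul_le_mul_of_nonneg_left hrate_le (sub_nonneg.2 hba)]
  · refine Or.inr ⟨hy, ?_, hge, ?_⟩
    · linarith [mul_le_mul_of_nonneg_left hrate.le (sub_nonneg.2 hba)]
    · have hq : 0 < q := (div_nonneg hx hs0.le).trans_lt hrate
      calc lam.1 < q * s := (div_lt_iff₀ hs0).1 hrate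
        _ ≤ q * (a + c) := mul_le_mul_of_nonneg_left hs.2 hq.le

lemma mem_stabilityRegion_self (ha : 0 < a) (hb : 0 < b) {lam : ℝ × ℝ} (hx : 0 ≤ lam.1)
    (hy : 0 ≤ lam.2) (hsum : lam.1 / a + lam.2 / b < 1) (hrate : lam.1 < q * a) :
    lam ∈ stabilityRegion a b q a :=
  (mem_stabilityRegion_iff ha).2
    ⟨hx, hy, (div_add_div_lt_one_iff_add_lt ha hb).1 hsum, (div_lt_iff₀ ha).2 hrate⟩

lemma exists_mem_stabilityRegion (ha : 0 < a) (hq : 0 < q) {lam : ℝ × ℝ} (hy : 0 ≤ lam.2)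
    (hsum : lam.1 + lam.2 < q * a + b * (1 - q)) (hge : q * a ≤ lam.1)
    (hlt : lam.1 < q * (a + c)) :
    ∃ s ∈ Icc a (a + c), lam ∈ stabilityRegion a b q s := by
  set s₀ := lam.1 / q
  have hx : 0 < lam.1 := (mul_pos hq ha).trans_le hge
  have hs₀ : 0 < s₀ := div_pos hx hq
  have has₀ : a ≤ s₀ := (le_div_iff₀' hq).2 hge
  have hs₀c : s₀ < a + c := (div_lt_iff₀' hq).2 hlt
  have hlim : Tendsto (fun s => b + (a - b) * (lam.1 / s)) (𝓝[>] s₀)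
      (𝓝 (b + (a - b) * (lam.1 / s₀))) :=
    ((continuousAt_const.div continuousAt_id hs₀.ne').const_mul _ |>.const_add _).tendsto
      |>.mono_left nhdsWithin_le_nhds
  have hval : lam.1 / s₀ = q := div_div_cancel₀ hx.ne'
  rw [hval] at hlim
  obtain ⟨s, hss₀, hsc, hs⟩ := (eventually_mem_nhdsWithin.and
    (((eventually_le_nhds hs₀c).filter_mono nhdsWithin_le_nhds).and
      (hlim.eventually_const_lt (u := lam.1 + lam.2) (by linarith)))).exists
  have hs0 : 0 < s := hs₀.trans hss₀
  refine ⟨s, ⟨has₀.trans hss₀.out.le, hsc⟩, (mem_stabilityRegion_iff hs0).2 ⟨hx.le, hy, hs, ?_⟩⟩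
  rw [← hval]
  exact div_lt_div_of_pos_left hx hs₀ hss₀

theorem iUnion_stabilityRegion_Icc (ha : 0 < a) (hb : 0 < b) (hba : b ≤ a) (hq : 0 < q)
    (hc : 0 ≤ c) :
    ⋃ s ∈ Icc a (a + c), stabilityRegion a b q s =
      {lam | 0 ≤ lam.1 ∧ 0 ≤ lam.2 ∧ lam.1 / a + lam.2 / b < 1 ∧ lam.1 < q * a} ∪
      {lam | 0 ≤ lam.2 ∧ lam.1 + lam.2 < q * a + b * (1 - q) ∧ q * a ≤ lam.1 ∧
        lam.1 < q * (a + c)} := by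
  refine subset_antisymm (iUnion₂_subset fun s hs => stabilityRegion_subset ha hb hba hs) ?_
  rintro lam (⟨hx, hy, hsum, hrate⟩ | ⟨hy, hsum, hge, hlt⟩)
  · exact mem_biUnion ⟨le_rfl, le_add_of_nonneg_right hc⟩
      (mem_stabilityRegion_self ha hb hx hy hsum hrate)
  · obtain ⟨s, hs, hmem⟩ := exists_mem_stabilityRegion ha hq hy hsum hge hlt
    exact mem_biUnion hs hmem

lemma biUnion_Icc_affine {α : Type*} (f : ℝ → Set α) (a : ℝ) (hc : 0 < c) :
    ⋃ p ∈ Icc (0 : ℝ) 1, f (a + c * p) = ⋃ s ∈ Icc a (a + c), f s := by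
  have himage : (fun p => a + c * p) '' Icc 0 1 = Icc a (a + c) := by
    simpa [add_comm] using image_affine_Icc' hc a 0 1
  rw [← himage, biUnion_image]

end

theorem stmt_12_general (q1 q2 p12 p13 p23 : ℝ)
    (hq1 : 0 < q1) (hq2 : 0 < q2) (hq2' : q2 < 1)
    (hp12 : 0 < p12) (hp13 : 0 < p13) (hp13' : p13 < 1)
    (hp23 : 0 < p23)
    (R2 : ℝ → Set (ℝ × ℝ))
    (hR2 : ∀ p, R2 p = {lam : ℝ × ℝ | 0 ≤ lam.1 ∧ 0 ≤ lam.2 ∧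
      lam.2 + ((1 - q2) * (1 - p13) * p12 * p + q2 * p23) * lam.1 /
        ((1 - q2) * (p13 + (1 - p13) * p12 * p)) < q2 * p23 ∧
      lam.1 < q1 * (1 - q2) * (p13 + (1 - p13) * p12 * p)})
    (hq : q2 < p13 / (p13 + p23)) :
    (⋃ p ∈ Set.Icc (0:ℝ) 1, R2 p) =
      {lam : ℝ × ℝ | 0 ≤ lam.1 ∧ 0 ≤ lam.2 ∧
        lam.1 / ((1 - q2) * p13) + lam.2 / (q2 * p23) < 1 ∧
        lam.1 < q1 * (1 - q2) * p13} ∪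
      {lam : ℝ × ℝ | 0 ≤ lam.2 ∧
        lam.1 + lam.2 < q1 * (1 - q2) * p13 + q2 * p23 * (1 - q1) ∧
        q1 * (1 - q2) * p13 ≤ lam.1 ∧
        lam.1 < q1 * (1 - q2) * (p13 + (1 - p13) * p12)} := by
  set a := (1 - q2) * p13
  set b := q2 * p23
  set c := (1 - q2) * (1 - p13) * p12
  have ha : 0 < a := mul_pos (sub_pos.2 hq2') hp13
  have hc : 0 < c := mul_pos (mul_pos (sub_pos.2 hq2') (sub_pos.2 hp13')) hp12
  have hba : b ≤ a := by
    rw [lt_div_iff₀ (by positivity)] at hq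
    linarith
  have hR2_eq : ∀ p, R2 p = stabilityRegion a b q1 (a + c * p) := by
    intro p
    rw [hR2, stabilityRegion, show c * p + b = a + c * p - a + b by ring,
      show (1 - q2) * (p13 + (1 - p13) * p12 * p) = a + c * p by ring,
      show q1 * (1 - q2) * (p13 + (1 - p13) * p12 * p) = q1 * (a + c * p) by ring]
  simp only [hR2_eq]
  rw [biUnion_Icc_affine _ a hc, iUnion_stabilityRegion_Icc ha (by positivity) hba hq1 hc.le,
    show q1 * (1 - q2) * p13 = q1 * a by ring,
    show q1 * (1 - q2) * (p13 + (1 - p13) * p12) = q1 * (a + c) by ring]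

/-- If `q2 < p13/(p13+p23)`, then `⋃_{p ∈ [0,1]} R2(p) = R2' ∪ R2''`,
with `R2'` and `R2''` as in (the paper's) equations for the subregion `R2`. -/
theorem stmt_12 (q1 q2 p12 p13 p23 : ℝ)
    (hq1 : 0 < q1) (hq1' : q1 < 1) (hq2 : 0 < q2) (hq2' : q2 < 1)
    (hp12 : 0 < p12) (hp12' : p12 ≤ 1) (hp13 : 0 < p13) (hp13' : p13 < 1)
    (hp23 : 0 < p23) (hp23' : p23 ≤ 1) (hp : p13 < p23)
    (R2 : ℝ → Set (ℝ × ℝ))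
    (hR2 : ∀ p, R2 p = {lam : ℝ × ℝ | 0 ≤ lam.1 ∧ 0 ≤ lam.2 ∧
      lam.2 + ((1 - q2) * (1 - p13) * p12 * p + q2 * p23) * lam.1 /
        ((1 - q2) * (p13 + (1 - p13) * p12 * p)) < q2 * p23 ∧
      lam.1 < q1 * (1 - q2) * (p13 + (1 - p13) * p12 * p)})
    (hq : q2 < p13 / (p13 + p23)) :
    (⋃ p ∈ Set.Icc (0:ℝ) 1, R2 p) =
      {lam : ℝ × ℝ | 0 ≤ lam.1 ∧ 0 ≤ lam.2 ∧
        lam.1 / ((1 - q2) * p13) + lam.2 / (q2 * p23) < 1 ∧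
        lam.1 < q1 * (1 - q2) * p13} ∪
      {lam : ℝ × ℝ | 0 ≤ lam.2 ∧
        lam.1 + lam.2 < q1 * (1 - q2) * p13 + q2 * p23 * (1 - q1) ∧
        q1 * (1 - q2) * p13 ≤ lam.1 ∧
        lam.1 < q1 * (1 - q2) * (p13 + (1 - p13) * p12)} :=
  stmt_12_general q1 q2 p12 p13 p23 hq1 hq2 hq2' hp12 hp13 hp13' hp23 R2 hR2 hq
end

section
/- If q1 ≥ p23/(p13+p23), then for every p ∈ [0,1] one has R1(p) ⊆ R1(0); consequently ⋃_{p ∈ [0,1]} R1(p) = R1(0) = { (λ1, λ2) ∈ ℝ² : λ1 ≥ 0, λ2 ≥ 0, λ1/(q1·p13) + λ2/((1−q1)·p23) < 1, and λ2 < q2·(1−q1)·p23 }. -/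
private lemma aux_clear (K c d R l1 l2 : ℝ) (hK : 0 < K)
    (h : (1 + c / K) * l1 + d / K * l2 < R) :
    (K + c) * l1 + d * l2 < R * K := by
  have h' := mul_lt_mul_of_pos_right h hK
  have e : ((1 + c / K) * l1 + d / K * l2) * K = (K + c) * l1 + d * l2 := by
    field_simp
  rw [e] at h'
  exact h'

private lemma aux_key (K a q1 p13 l1 l2 : ℝ) (hK : 0 < K) (ha : 0 ≤ a)
    (hl1 : 0 ≤ l1) (hq1 : 0 < q1) (hp13 : 0 < p13) (hk : K ≤ q1 * p13)
    (h : (K + a * q1) * l1 + q1 * (a + p13) * l2 < q1 * (a + p13) * K) :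
    l1 * K + q1 * p13 * l2 < q1 * p13 * K := by
  nlinarith [mul_lt_mul_of_pos_right h hp13,
    mul_nonneg (mul_nonneg ha (sub_nonneg.mpr hk)) hl1,
    (show (0:ℝ) < a + p13 by linarith)]

private lemma aux_div (K b l1 l2 : ℝ) (hK : 0 < K) :
    l1 + b / K * l2 < b ↔ l1 * K + b * l2 < b * K := by
  have e : l1 + b / K * l2 = (l1 * K + b * l2) / K := by field_simp
  rw [e, div_lt_iff₀ hK]

private lemma aux_div2 (K b l1 l2 : ℝ) (hK : 0 < K) (hb : 0 < b) :
    l1 / b + l2 / K < 1 ↔ l1 * K + b * l2 < b * K := by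
  have e : l1 / b + l2 / K = (l1 * K + b * l2) / (b * K) := by field_simp
  rw [e, div_lt_one (by positivity), mul_comm b K]

/-- If `q1 ≥ p23/(p13+p23)`, then for every `p ∈ [0,1]` one has
`R1(p) ⊆ R1(0)`; consequently `⋃_{p ∈ [0,1]} R1(p) = R1(0)`, which equals the set
`{ (λ1, λ2) : λ1 ≥ 0, λ2 ≥ 0, λ1/(q1·p13) + λ2/((1−q1)·p23) < 1, λ2 < q2·(1−q1)·p23 }`. -/
theorem stmt_13 (q1 q2 p12 p13 p23 : ℝ)
    (hq1 : 0 < q1) (hq1' : q1 < 1) (hq2 : 0 < q2) (hq2' : q2 < 1)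
    (hp12 : 0 < p12) (hp12' : p12 ≤ 1) (hp13 : 0 < p13) (hp13' : p13 < 1)
    (hp23 : 0 < p23) (hp23' : p23 ≤ 1) (hp : p13 < p23)
    (R1 : ℝ → Set (ℝ × ℝ))
    (hR1 : ∀ p, R1 p = {lam : ℝ × ℝ | 0 ≤ lam.1 ∧ 0 ≤ lam.2 ∧
      (1 + p12 * p * (1 - p13) * q1 / ((1 - q1) * p23)) * lam.1 +
        (q1 * (p12 * p * (1 - p13) + p13) / ((1 - q1) * p23)) * lam.2 <
          q1 * ((1 - p13) * p12 * p + p13) ∧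
      lam.2 + ((1 - p13) * p12 * p / (p13 + (1 - p13) * p12 * p)) * lam.1 <
        q2 * (1 - q1) * p23})
    (hq : q1 ≥ p23 / (p13 + p23)) :
    (∀ p ∈ Set.Icc (0:ℝ) 1, R1 p ⊆ R1 0) ∧
    (⋃ p ∈ Set.Icc (0:ℝ) 1, R1 p) = R1 0 ∧
    R1 0 = {lam : ℝ × ℝ | 0 ≤ lam.1 ∧ 0 ≤ lam.2 ∧
      lam.1 / (q1 * p13) + lam.2 / ((1 - q1) * p23) < 1 ∧
      lam.2 < q2 * (1 - q1) * p23} := by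
  have hq1'' : (0:ℝ) < 1 - q1 := by linarith
  have hK : (0:ℝ) < (1 - q1) * p23 := mul_pos hq1'' hp23
  have hk : (1 - q1) * p23 ≤ q1 * p13 := by
    rw [ge_iff_le, div_le_iff₀ (by positivity)] at hq
    nlinarith
  have hmem0 : ∀ lam : ℝ × ℝ, lam ∈ R1 0 ↔ (0 ≤ lam.1 ∧ 0 ≤ lam.2 ∧
      lam.1 + q1 * p13 / ((1 - q1) * p23) * lam.2 < q1 * p13 ∧
      lam.2 < q2 * (1 - q1) * p23) := by
    intro lam
    rw [hR1 0]
    simp only [Set.mem_setOf_eq]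
    norm_num
  have hsub : ∀ p ∈ Set.Icc (0:ℝ) 1, R1 p ⊆ R1 0 := by
    intro p hpmem lam hlam
    rw [hR1 p] at hlam
    rw [hmem0]
    obtain ⟨h1, h2, h3, h4⟩ := hlam
    obtain ⟨hp0, hp1⟩ := hpmem
    have ha : 0 ≤ p12 * p * (1 - p13) :=
      mul_nonneg (mul_nonneg hp12.le hp0) (by linarith)
    refine ⟨h1, h2, ?_, ?_⟩
    · have h3' : (1 + p12 * p * (1 - p13) * q1 / ((1 - q1) * p23)) * lam.1 +
          q1 * (p12 * p * (1 - p13) + p13) / ((1 - q1) * p23) * lam.2 <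
          q1 * (p12 * p * (1 - p13) + p13) := by
        have : q1 * ((1 - p13) * p12 * p + p13) = q1 * (p12 * p * (1 - p13) + p13) := by
          ring
        linarith [h3, this.le]
      have h3p := aux_clear ((1 - q1) * p23) (p12 * p * (1 - p13) * q1)
        (q1 * (p12 * p * (1 - p13) + p13)) (q1 * (p12 * p * (1 - p13) + p13))
        lam.1 lam.2 hK h3'
      have h3q : ((1 - q1) * p23 + p12 * p * (1 - p13) * q1) * lam.1 +
          q1 * (p12 * p * (1 - p13) + p13) * lam.2 <
          q1 * (p12 * p * (1 - p13) + p13) * ((1 - q1) * p23) := h3p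
      have hpoly := aux_key ((1 - q1) * p23) (p12 * p * (1 - p13)) q1 p13 lam.1 lam.2
        hK ha h1 hq1 hp13 hk (by linarith [h3q])
      exact (aux_div ((1 - q1) * p23) (q1 * p13) lam.1 lam.2 hK).mpr hpoly
    · have hD : 0 ≤ (1 - p13) * p12 * p / (p13 + (1 - p13) * p12 * p) :=
        div_nonneg (by nlinarith) (by nlinarith)
      nlinarith [mul_nonneg hD h1, h4]
  refine ⟨hsub, ?_, ?_⟩
  · apply subset_antisymm
    · exact Set.iUnion₂_subset hsub
    · exact Set.subset_biUnion_of_mem (by norm_num : (0:ℝ) ∈ Set.Icc (0:ℝ) 1)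
  · ext lam
    rw [hmem0]
    simp only [Set.mem_setOf_eq]
    rw [aux_div ((1 - q1) * p23) (q1 * p13) lam.1 lam.2 hK,
      aux_div2 ((1 - q1) * p23) (q1 * p13) lam.1 lam.2 hK (by positivity)]
end

section
/- Let q1 = 1/5, q2 = 3/10, p12 = 9/10, p13 = 1/2, p23 = 4/5. Then the point (λ1, λ2) = (3/25, 141/1000) belongs to R2(4/5), but belongs to none of R1(0), R1(1), R2(0), R2(1). Consequently, the union over p ∈ [0,1] of R1(p) ∪ R2(p) strictly contains (R1(0) ∪ R2(0)) ∪ (R1(1) ∪ R2(1)); i.e., partial (probabilistic) cooperation strictly enlarges the stability region beyond both no cooperation (p = 0) and full cooperation (p = 1) for these parameter values. -/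
/-- For `q1 = 1/5`, `q2 = 3/10`, `p12 = 9/10`, `p13 = 1/2`, `p23 = 4/5`,
the point `(λ1, λ2) = (3/25, 141/1000)` belongs to `R2(4/5)` but to none of
`R1(0), R1(1), R2(0), R2(1)`; consequently `⋃_{p ∈ [0,1]} (R1(p) ∪ R2(p))` strictly
contains `(R1(0) ∪ R2(0)) ∪ (R1(1) ∪ R2(1))`: partial cooperation strictly enlarges
the stability region beyond both no cooperation and full cooperation. -/
theorem stmt_14 (q1 q2 p12 p13 p23 : ℝ)
    (hq1 : q1 = 1/5) (hq2 : q2 = 3/10) (hp12 : p12 = 9/10)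
    (hp13 : p13 = 1/2) (hp23 : p23 = 4/5)
    (R1 R2 : ℝ → Set (ℝ × ℝ))
    (hR1 : ∀ p, R1 p = {lam : ℝ × ℝ | 0 ≤ lam.1 ∧ 0 ≤ lam.2 ∧
      (1 + p12 * p * (1 - p13) * q1 / ((1 - q1) * p23)) * lam.1 +
        (q1 * (p12 * p * (1 - p13) + p13) / ((1 - q1) * p23)) * lam.2 <
          q1 * ((1 - p13) * p12 * p + p13) ∧
      lam.2 + ((1 - p13) * p12 * p / (p13 + (1 - p13) * p12 * p)) * lam.1 <
        q2 * (1 - q1) * p23})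
    (hR2 : ∀ p, R2 p = {lam : ℝ × ℝ | 0 ≤ lam.1 ∧ 0 ≤ lam.2 ∧
      lam.2 + ((1 - q2) * (1 - p13) * p12 * p + q2 * p23) * lam.1 /
        ((1 - q2) * (p13 + (1 - p13) * p12 * p)) < q2 * p23 ∧
      lam.1 < q1 * (1 - q2) * (p13 + (1 - p13) * p12 * p)}) :
    ((3/25, 141/1000) : ℝ × ℝ) ∈ R2 (4/5) ∧
    ((3/25, 141/1000) : ℝ × ℝ) ∉ R1 0 ∧
    ((3/25, 141/1000) : ℝ × ℝ) ∉ R1 1 ∧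
    ((3/25, 141/1000) : ℝ × ℝ) ∉ R2 0 ∧
    ((3/25, 141/1000) : ℝ × ℝ) ∉ R2 1 ∧
    ((R1 0 ∪ R2 0) ∪ (R1 1 ∪ R2 1)) ⊂
      ⋃ p ∈ Set.Icc (0:ℝ) 1, (R1 p ∪ R2 p) := by
  subst hq1 hq2 hp12 hp13 hp23
  have hmem : ((3/25, 141/1000) : ℝ × ℝ) ∈ R2 (4/5) := by
    rw [hR2]; constructor
    · norm_num
    constructor
    · norm_num
    constructor <;> norm_num
  have h10 : ((3/25, 141/1000) : ℝ × ℝ) ∉ R1 0 := by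
    rw [hR1]; intro h; have := h.2.2.1; norm_num at this
  have h11 : ((3/25, 141/1000) : ℝ × ℝ) ∉ R1 1 := by
    rw [hR1]; intro h; have := h.2.2.2; norm_num at this
  have h20 : ((3/25, 141/1000) : ℝ × ℝ) ∉ R2 0 := by
    rw [hR2]; intro h; have := h.2.2.2; norm_num at this
  have h21 : ((3/25, 141/1000) : ℝ × ℝ) ∉ R2 1 := by
    rw [hR2]; intro h; have := h.2.2.1; norm_num at this
  refine ⟨hmem, h10, h11, h20, h21, ?_, ?_⟩
  · intro x hx
    rcases hx with hx | hx
    · rcases hx with hx | hx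
      · exact Set.mem_biUnion (by norm_num : (0:ℝ) ∈ Set.Icc (0:ℝ) 1) (Or.inl hx)
      · exact Set.mem_biUnion (by norm_num : (0:ℝ) ∈ Set.Icc (0:ℝ) 1) (Or.inr hx)
    · rcases hx with hx | hx
      · exact Set.mem_biUnion (by norm_num : (1:ℝ) ∈ Set.Icc (0:ℝ) 1) (Or.inl hx)
      · exact Set.mem_biUnion (by norm_num : (1:ℝ) ∈ Set.Icc (0:ℝ) 1) (Or.inr hx)
  · intro hsub
    have : ((3/25, 141/1000) : ℝ × ℝ) ∈ (R1 0 ∪ R2 0) ∪ (R1 1 ∪ R2 1) :=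
      hsub (Set.mem_biUnion (by norm_num : (4/5:ℝ) ∈ Set.Icc (0:ℝ) 1) (Or.inr hmem))
    rcases this with (h | h) | (h | h)
    exacts [h10 h, h20 h, h11 h, h21 h]
end
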